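/- arXiv:2505.17400 — 4 statements merged into one kernel-verified Lean document; each statement's English description precedes it below -/
import Mathlib

section
/- Let 3 ≤ s ≤ d and r, δ > 0. Then there exist a positive integer M and vectors α_1, …, α_M ∈ ℝ^d such that for all i ≠ j in [M]: each α_i has exactly s nonzero coordinates, ‖α_i‖_2^2 = r^2 + 2δ^2, δ^2 ≤ ‖α_i − α_j‖_2^2 ≤ 8δ^2, and log M ≥ ((s−1)/2) log((d−s)/((s−1)/2)). -/
open Finset



lemma count_diff_eq {n : ℕ} (f : Fin n → Fin 3) (A : Finset (Fin n)) :
    ((univ : Finset (Fin n → Fin 3)).filter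
      (fun g => (univ.filter fun i => g i ≠ f i) = A)).card = 2 ^ A.card := by
  have h1 : (A.pi fun _ : Fin n => ((univ : Finset (Fin 3)).erase 0)).card = 2 ^ A.card := by
    rw [Finset.card_pi]
    have : ∀ i ∈ A, ((univ : Finset (Fin 3)).erase 0).card = 2 := by
      intro i _
      rw [Finset.card_erase_of_mem (mem_univ _), Finset.card_univ, Fintype.card_fin]
    rw [Finset.prod_congr rfl this, Finset.prod_const]
  rw [← h1]
  apply Finset.card_bij' (i := fun g _ => fun i _ => g i - f i)
    (j := fun p _ => fun i => if h : i ∈ A then p i h + f i else f i)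
  · -- i maps into pi
    intro g hg
    rw [Finset.mem_filter] at hg
    rw [Finset.mem_pi]
    intro i hi
    rw [Finset.mem_erase]
    refine ⟨?_, mem_univ _⟩
    rw [sub_ne_zero]
    have := hg.2
    rw [Finset.ext_iff] at this
    have := (this i).mpr hi
    simpa using this
  · -- j maps into filter
    intro p hp
    rw [Finset.mem_pi] at hp
    rw [Finset.mem_filter]
    refine ⟨mem_univ _, ?_⟩
    ext i
    simp only [Finset.mem_filter, mem_univ, true_and]
    by_cases h : i ∈ A
    · simp only [h, dif_pos, iff_true]
      have := hp i h
      rw [Finset.mem_erase] at this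
      intro hc
      exact this.1 (by rwa [add_eq_right] at hc)
    · simp [h]
  · -- left inverse
    intro g hg
    rw [Finset.mem_filter] at hg
    funext i
    by_cases h : i ∈ A
    · simp [h]
    · simp only [h, dif_neg, not_false_iff]
      have := hg.2
      rw [Finset.ext_iff] at this
      have h2 := (this i).not.mpr (by simpa using h)
      simp only [Finset.mem_filter, mem_univ, true_and, not_not] at h2
      exact h2.symm
  · -- right inverse
    intro p hp
    funext i hi
    simp [hi]

lemma count_dist_eq {n : ℕ} (f : Fin n → Fin 3) (ρ : ℕ) :
    ((univ : Finset (Fin n → Fin 3)).filter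
      (fun g => (univ.filter fun i => g i ≠ f i).card = ρ)).card = n.choose ρ * 2 ^ ρ := by
  rw [Finset.card_eq_sum_card_fiberwise (f := fun g => univ.filter fun i => g i ≠ f i)
      (t := Finset.powersetCard ρ univ)
      (fun g hg => by
        rw [Finset.mem_coe, Finset.mem_powersetCard]
        exact ⟨Finset.subset_univ _, (Finset.mem_filter.mp (Finset.mem_coe.mp hg)).2⟩)]
  have hA : ∀ A ∈ Finset.powersetCard ρ (univ : Finset (Fin n)),
      (((univ : Finset (Fin n → Fin 3)).filter
        (fun g => (univ.filter fun i => g i ≠ f i).card = ρ)).filter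
          (fun g => (univ.filter fun i => g i ≠ f i) = A)).card = 2 ^ ρ := by
    intro A hA
    have hcard : A.card = ρ := (Finset.mem_powersetCard.mp hA).2
    rw [Finset.filter_filter]
    have : ∀ g : Fin n → Fin 3,
        (((univ.filter fun i => g i ≠ f i).card = ρ) ∧ (univ.filter fun i => g i ≠ f i) = A)
          ↔ ((univ.filter fun i => g i ≠ f i) = A) := by
      intro g
      constructor
      · exact fun h => h.2
      · intro h; exact ⟨by rw [h, hcard], h⟩
    rw [Finset.filter_congr (fun g _ => this g), count_diff_eq, hcard]
  rw [Finset.sum_congr rfl hA, Finset.sum_const, Finset.card_powersetCard,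
    Finset.card_univ, Fintype.card_fin, smul_eq_mul]

lemma choose_mono_right {n ρ e : ℕ} (h : ρ ≤ e) (he : 2 * e ≤ n) :
    n.choose ρ ≤ n.choose e := by
  induction e with
  | zero => simp_all
  | succ m ih =>
    rcases Nat.lt_or_ge ρ (m+1) with h' | h'
    · exact (ih (by omega) (by omega)).trans
        (Nat.choose_le_succ_of_lt_half_left (by omega))
    · have : ρ = m + 1 := by omega
      simp [this]

lemma ball_card_le {n : ℕ} (f : Fin n → Fin 3) (e : ℕ) (he : 2 * e ≤ n) :
    ((univ : Finset (Fin n → Fin 3)).filter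
      (fun g => (univ.filter fun i => g i ≠ f i).card ≤ e)).card ≤ 2 ^ (e + 1) * n.choose e := by
  rw [Finset.card_eq_sum_card_fiberwise (f := fun g => (univ.filter fun i => g i ≠ f i).card)
      (t := Finset.range (e + 1))
      (fun g hg => by
        rw [Finset.mem_coe, Finset.mem_range]
        exact Nat.lt_succ_of_le (Finset.mem_filter.mp (Finset.mem_coe.mp hg)).2)]
  have hfib : ∀ ρ ∈ Finset.range (e + 1),
      (((univ : Finset (Fin n → Fin 3)).filter
        (fun g => (univ.filter fun i => g i ≠ f i).card ≤ e)).filter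
          (fun g => (univ.filter fun i => g i ≠ f i).card = ρ)).card = n.choose ρ * 2 ^ ρ := by
    intro ρ hρ
    rw [Finset.mem_range] at hρ
    rw [Finset.filter_filter]
    rw [Finset.filter_congr (fun g _ => by
      constructor
      · exact fun h => h.2
      · intro h; exact ⟨by omega, h⟩)]
    exact count_dist_eq f ρ
  rw [Finset.sum_congr rfl hfib]
  calc ∑ ρ ∈ Finset.range (e + 1), n.choose ρ * 2 ^ ρ
      ≤ ∑ ρ ∈ Finset.range (e + 1), n.choose e * 2 ^ ρ := by
        apply Finset.sum_le_sum
        intro ρ hρ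
        rw [Finset.mem_range] at hρ
        exact Nat.mul_le_mul_right _ (choose_mono_right (by omega) he)
    _ = n.choose e * ∑ ρ ∈ Finset.range (e + 1), 2 ^ ρ := by rw [Finset.mul_sum]
    _ ≤ n.choose e * 2 ^ (e + 1) := by
        apply Nat.mul_le_mul_left
        have hgs : ∀ m : ℕ, ∑ ρ ∈ Finset.range m, 2 ^ ρ ≤ 2 ^ m := by
          intro m
          induction m with
          | zero => simp
          | succ t ih =>
            rw [Finset.sum_range_succ]
            have h2 : (2:ℕ) ^ (t+1) = 2 ^ t + 2 ^ t := by ring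
            omega
        exact hgs (e + 1)
    _ = 2 ^ (e + 1) * n.choose e := Nat.mul_comm _ _

lemma diff_comm {n : ℕ} (σ τ : Fin n → Fin 3) :
    (univ.filter fun i => σ i ≠ τ i) = (univ.filter fun i => τ i ≠ σ i) := by
  ext i; simp [ne_comm]

lemma exists_packing {n : ℕ} (e : ℕ) (T : Finset (Fin n → Fin 3)) (hT : T.Nonempty) :
    ∃ S : Finset (Fin n → Fin 3), S ⊆ T ∧ S.Nonempty ∧
      (∀ σ ∈ S, ∀ τ ∈ S, σ ≠ τ → e + 1 ≤ (univ.filter fun i => σ i ≠ τ i).card) ∧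
      (∀ τ ∈ T, ∃ σ ∈ S, (univ.filter fun i => σ i ≠ τ i).card ≤ e) := by
  classical
  set pair : Finset (Fin n → Fin 3) → Prop := fun S =>
    ∀ σ ∈ S, ∀ τ ∈ S, σ ≠ τ → e + 1 ≤ (univ.filter fun i => σ i ≠ τ i).card with hpair
  set P := (T.powerset.filter pair) with hP
  have hne : P.Nonempty := ⟨∅, by simp [hP, hpair]⟩
  obtain ⟨S, hSP, hSmax⟩ := Finset.exists_max_image P Finset.card hne
  rw [hP, Finset.mem_filter, Finset.mem_powerset] at hSP
  obtain ⟨hST, hSpair⟩ := hSP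
  rw [hpair] at hSpair
  have hcov : ∀ τ ∈ T, ∃ σ ∈ S, (univ.filter fun i => σ i ≠ τ i).card ≤ e := by
    intro τ hτ
    by_contra hc
    push_neg at hc
    have hτS : τ ∉ S := by
      intro h
      have := hc τ h
      simp at this
    have hins : insert τ S ∈ P := by
      rw [hP, Finset.mem_filter, Finset.mem_powerset]
      refine ⟨Finset.insert_subset hτ hST, ?_⟩
      rw [hpair]
      intro σ hσ τ' hτ' hne'
      rcases Finset.mem_insert.mp hσ with rfl | hσ'
      · rcases Finset.mem_insert.mp hτ' with rfl | hτ''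
        · exact absurd rfl hne'
        · rw [diff_comm]
          exact hc τ' hτ''
      · rcases Finset.mem_insert.mp hτ' with rfl | hτ''
        · exact hc σ hσ'
        · exact hSpair σ hσ' τ' hτ'' hne'
    have h1 := hSmax _ hins
    have h2 : (insert τ S).card = S.card + 1 := Finset.card_insert_of_notMem hτS
    omega
  obtain ⟨τ0, hτ0⟩ := hT
  obtain ⟨σ0, hσ0, -⟩ := hcov τ0 hτ0
  exact ⟨S, hST, ⟨σ0, hσ0⟩, hSpair, hcov⟩

lemma choose_prod_ratio {n e : ℕ} : ∀ k, e ≤ k → k ≤ n →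
    (n.choose k : ℝ) * ∏ i ∈ Finset.Ico e k, ((i:ℝ)+1)
      = (n.choose e : ℝ) * ∏ i ∈ Finset.Ico e k, ((n:ℝ) - i) := by
  intro k
  induction k with
  | zero =>
    intro h1 _
    interval_cases e
    simp
  | succ k ih =>
    intro h1 h2
    rcases Nat.lt_or_ge e (k+1) with h | h
    · have he : e ≤ k := by omega
      have ihe := ih he (by omega)
      rw [Finset.prod_Ico_succ_top he, Finset.prod_Ico_succ_top he]
      have key : (n.choose (k+1) : ℝ) * ((k:ℝ)+1) = (n.choose k : ℝ) * ((n:ℝ) - k) := by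
        calc (n.choose (k+1) : ℝ) * ((k:ℝ)+1)
            = ((n.choose (k+1) * (k+1) : ℕ) : ℝ) := by push_cast; ring
          _ = ((n.choose k * (n - k) : ℕ) : ℝ) := by rw [Nat.choose_succ_right_eq]
          _ = (n.choose k : ℝ) * ((n:ℝ) - k) := by
              push_cast [Nat.cast_sub (show k ≤ n by omega)]; ring
      linear_combination (∏ i ∈ Finset.Ico e k, ((i:ℝ)+1)) * key
        + ((n:ℝ) - k) * ihe
    · have heq : e = k + 1 := by omega
      subst heq
      simp

-- squared ratio lower bound via reflection pairing
lemma sq_ratio_ge {n e k N : ℕ} (hek : e + 1 ≤ k) (hnk : n = N + k) (hN : 1 ≤ N) :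
    ((4 * ((n:ℝ) - e) * ((N:ℝ)+1)) / (((e:ℝ)+k+1)^2)) ^ (k - e)
      ≤ ((n.choose k : ℝ) / (n.choose e : ℝ)) ^ 2 := by
  have hkn : k ≤ n := by omega
  have hprodpos : (0:ℝ) < ∏ i ∈ Finset.Ico e k, ((i:ℝ)+1) := by
    apply Finset.prod_pos; intro i _; positivity
  have hce : (0:ℝ) < (n.choose e : ℝ) := by
    exact_mod_cast Nat.choose_pos (by omega)
  have hR : ((n.choose k : ℝ) / (n.choose e : ℝ))
      = ∏ i ∈ Finset.Ico e k, (((n:ℝ) - i) / ((i:ℝ)+1)) := by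
    rw [Finset.prod_div_distrib]
    rw [eq_div_iff (by positivity), div_mul_eq_mul_div, div_eq_iff (ne_of_gt hce)]
    linear_combination choose_prod_ratio (n:=n) (e:=e) k (by omega) hkn
  set g : ℕ → ℝ := fun i => ((n:ℝ) - i) / ((i:ℝ)+1) with hg
  have hA0 : (0:ℝ) ≤ (4 * ((n:ℝ) - e) * ((N:ℝ)+1)) / (((e:ℝ)+k+1)^2) := by
    have : (e:ℝ) ≤ (n:ℝ) := by exact_mod_cast Nat.cast_le.mpr (by omega)
    have h2 : (0:ℝ) ≤ (n:ℝ) - e := by linarith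
    positivity
  have key : ∀ j ∈ Finset.range (k - e),
      (4 * ((n:ℝ) - e) * ((N:ℝ)+1)) / (((e:ℝ)+k+1)^2) ≤ g (e+j) * g (k-1-j) := by
    intro j hj
    rw [Finset.mem_range] at hj
    have hj1 : j + e + 1 ≤ k := by omega
    have hje : (0:ℝ) ≤ (j:ℝ) := by positivity
    have hjk : (j:ℝ) + e + 1 ≤ (k:ℝ) := by exact_mod_cast Nat.cast_le.mpr hj1
    have hNr : (1:ℝ) ≤ (N:ℝ) := by exact_mod_cast hN
    have c1 : ((e + j : ℕ) : ℝ) = (e:ℝ) + j := by push_cast; ring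
    have c2 : ((k - 1 - j : ℕ) : ℝ) = (k:ℝ) - 1 - j := by
      rw [Nat.sub_sub]
      rw [Nat.cast_sub (by omega)]
      push_cast; ring
    have cn : (n:ℝ) = (N:ℝ) + k := by rw [hnk]; push_cast; ring
    have hF1 : ((n:ℝ) - ((e:ℝ)+j)) * ((n:ℝ) - ((k:ℝ)-1-j))
        = ((n:ℝ)-e)*((N:ℝ)+1) + (j:ℝ)*((k:ℝ)-e-1-j) := by rw [cn]; ring
    have hF2 : 4*(((e:ℝ)+j+1) * (((k:ℝ)-1-j)+1)) ≤ ((e:ℝ)+k+1)^2 := by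
      nlinarith [sq_nonneg ((e:ℝ)+j+1-((k:ℝ)-j))]
    have hP0 : (0:ℝ) ≤ ((n:ℝ)-e)*((N:ℝ)+1) := by
      have : (e:ℝ) ≤ (n:ℝ) := by exact_mod_cast Nat.cast_le.mpr (by omega)
      nlinarith
    have hj2 : (0:ℝ) ≤ (j:ℝ)*((k:ℝ)-e-1-j) := by
      apply mul_nonneg hje
      linarith
    rw [hg]
    simp only [c1, c2]
    rw [div_mul_div_comm]
    rw [div_le_div_iff₀ (by positivity) (mul_pos (by positivity) (by linarith : (0:ℝ) < ((k:ℝ)-1-(j:ℝ))+1))]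
    have t2 : (0:ℝ) ≤ ((j:ℝ)*((k:ℝ)-e-1-j)) * (((e:ℝ)+k+1)^2) :=
      mul_nonneg hj2 (sq_nonneg _)
    calc 4 * ((n:ℝ) - e) * ((N:ℝ)+1) * (((e:ℝ)+j+1)*(((k:ℝ)-1-j)+1))
        = (((n:ℝ)-e)*((N:ℝ)+1)) * (4*(((e:ℝ)+j+1)*(((k:ℝ)-1-j)+1))) := by ring
      _ ≤ (((n:ℝ)-e)*((N:ℝ)+1)) * (((e:ℝ)+k+1)^2) := mul_le_mul_of_nonneg_left hF2 hP0
      _ ≤ (((n:ℝ)-((e:ℝ)+j)) * ((n:ℝ)-((k:ℝ)-1-j))) * (((e:ℝ)+k+1)^2) := by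
          have hexp : (((n:ℝ)-((e:ℝ)+j)) * ((n:ℝ)-((k:ℝ)-1-j))) * (((e:ℝ)+k+1)^2)
              = (((n:ℝ)-e)*((N:ℝ)+1))*(((e:ℝ)+k+1)^2)
                + ((j:ℝ)*((k:ℝ)-e-1-j))*(((e:ℝ)+k+1)^2) := by
            linear_combination (((e:ℝ)+k+1)^2) * hF1
          linarith
      _ = ((n:ℝ) - ((e:ℝ)+j)) * ((n:ℝ) - ((k:ℝ)-1-j)) * ((e:ℝ)+k+1)^2 := by ring
  calc ((4 * ((n:ℝ) - e) * ((N:ℝ)+1)) / (((e:ℝ)+k+1)^2)) ^ (k - e)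
      = ∏ _j ∈ Finset.range (k-e), (4 * ((n:ℝ) - e) * ((N:ℝ)+1)) / (((e:ℝ)+k+1)^2) := by
        rw [Finset.prod_const, Finset.card_range]
    _ ≤ ∏ j ∈ Finset.range (k-e), (g (e+j) * g (k-1-j)) :=
        Finset.prod_le_prod (fun _ _ => hA0) key
    _ = (∏ j ∈ Finset.range (k-e), g (e+j)) * (∏ j ∈ Finset.range (k-e), g (k-1-j)) :=
        Finset.prod_mul_distrib
    _ = (∏ j ∈ Finset.range (k-e), g (e+j)) * (∏ j ∈ Finset.range (k-e), g (e+j)) := by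
        congr 1
        rw [← Finset.prod_range_reflect (fun t => g (e+t)) (k-e)]
        apply Finset.prod_congr rfl
        intro j hj
        rw [Finset.mem_range] at hj
        congr 1
        omega
    _ = ((n.choose k : ℝ) / (n.choose e : ℝ)) ^ 2 := by
        rw [hR, Finset.prod_Ico_eq_prod_range]
        ring

lemma poly_aux (k N : ℝ) (hk : 2 ≤ k) (h1 : k + 1 ≤ 2*N) (h2 : N ≤ 2*k - 1) :
    189 * (3*k+1)^2 * N^2 ≤ 800 * (2*N+k+1) * (N+1) * k^2 := by
  nlinarith [sq_nonneg (N-k), sq_nonneg (2*k-1-N),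
    mul_nonneg (sub_nonneg.mpr h2) (sub_nonneg.mpr (by linarith : (1:ℝ) ≤ N)),
    sq_nonneg k, sq_nonneg N,
    mul_nonneg (sub_nonneg.mpr h2) (sq_nonneg k),
    mul_nonneg (sub_nonneg.mpr (by linarith : k + 1 ≤ 2*N)) (sq_nonneg k),
    mul_nonneg (mul_nonneg (sub_nonneg.mpr h2) (sub_nonneg.mpr hk)) (by linarith : (0:ℝ) ≤ N)]


lemma alg_aux (x B C : ℝ) (m' : ℕ) (hx : 0 < x) (hcore : 4 ≤ B^(m'+2)*x)
    (hC : (B*x^2/4)^(m'+2) ≤ C) : x^(2*m'+3) ≤ 4^(m'+1) * C := by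
  have h1 : x^(2*m'+3) * 1 ≤ x^(2*m'+3) * (B^(m'+2) * x / 4) := by
    apply mul_le_mul_of_nonneg_left _ (by positivity)
    linarith
  have h2 : x^(2*m'+3) * (B^(m'+2) * x / 4) = 4^(m'+1) * (B*x^2/4)^(m'+2) := by
    rw [div_pow, mul_pow, ← pow_mul]
    rw [show 2*(m'+2) = (2*m'+3)+1 from by omega, pow_succ (4:ℝ) (m'+1), pow_succ x]
    field_simp
    ring
  calc x^(2*m'+3) = x^(2*m'+3) * 1 := by ring
    _ ≤ 4^(m'+1) * (B*x^2/4)^(m'+2) := by rw [← h2]; exact h1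
    _ ≤ 4^(m'+1) * C := by
        apply mul_le_mul_of_nonneg_left hC (by positivity)

set_option maxHeartbeats 1000000 in
lemma key_ineq {N k e : ℕ} (hk : 2 ≤ k) (he1 : 2*e + 1 ≤ k) (hN : k + 1 ≤ 2*N) :
    ((2*(N:ℝ))/k)^(2*(k-e)-1)
      ≤ 4^((k-e)-1) * ((((N+k).choose k : ℝ)) / (((N+k).choose e : ℝ)))^2 := by
  have hNk : (0:ℝ) < N := by exact_mod_cast Nat.pos_of_ne_zero (by omega)
  have hkR : (0:ℝ) < k := by positivity
  have hkc : (2:ℝ) ≤ (k:ℝ) := by exact_mod_cast hk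
  have hNc : (k:ℝ) + 1 ≤ 2*(N:ℝ) := by exact_mod_cast hN
  have hec : 2*(e:ℝ) + 1 ≤ (k:ℝ) := by exact_mod_cast he1
  set n := N + k with hn
  have hnc : (n:ℝ) = (N:ℝ) + k := by rw [hn]; push_cast; ring
  set x : ℝ := (2*(N:ℝ))/k with hx
  set A : ℝ := (4 * ((n:ℝ) - e) * ((N:ℝ)+1)) / (((e:ℝ)+k+1)^2) with hA
  set B : ℝ := A * (k:ℝ)^2 / (N:ℝ)^2 with hB
  have hxpos : 0 < x := by rw [hx]; positivity
  have hApos : 0 < A := by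
    rw [hA, hnc]
    have : (e:ℝ) < (N:ℝ) + k := by linarith
    have h2 : (0:ℝ) < (N:ℝ) + (k:ℝ) - e := by linarith
    positivity
  have hBpos : 0 < B := by rw [hB]; positivity
  have hAB : A = B * x^2 / 4 := by
    rw [hB, hx]
    field_simp
    ring
  obtain ⟨m', hm'⟩ : ∃ m', k - e = m' + 2 := ⟨k - e - 2, by omega⟩
  -- core: B^(m'+2) * x ≥ 4
  have hcore : (4:ℝ) ≤ B^(m'+2) * x := by
    rcases Nat.lt_or_ge N (2*k) with hcase | hcase
    · -- N ≤ 2k-1 : B ≥ 189/100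
      have hNle : (N:ℝ) ≤ 2*(k:ℝ) - 1 := by
        have : N ≤ 2*k - 1 := by omega
        have h2 : ((2*k - 1 : ℕ):ℝ) = 2*(k:ℝ)-1 := by
          rw [Nat.cast_sub (by omega)]; push_cast; ring
        rw [← h2]; exact_mod_cast this
      have hBge : (189:ℝ)/100 ≤ B := by
        rw [hB, hA, div_mul_eq_mul_div, div_div, le_div_iff₀ (by positivity)]
        have f1 : 2*(N:ℝ)+k+1 ≤ 2*((n:ℝ) - e) := by rw [hnc]; linarith
        have f2 : 2*((e:ℝ)+k+1) ≤ 3*(k:ℝ)+1 := by linarith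
        have f3 : ((e:ℝ)+k+1)^2 ≤ ((3*(k:ℝ)+1)/2)^2 := by
          apply pow_le_pow_left₀ (by positivity) (by linarith)
        have f4 := poly_aux (k:ℝ) (N:ℝ) hkc hNc hNle
        nlinarith [mul_pos hNk hNk, sq_nonneg ((N:ℝ)),
          mul_nonneg (mul_nonneg (by linarith : (0:ℝ) ≤ (N:ℝ)+1) (by positivity : (0:ℝ) ≤ (k:ℝ)^2)) (by linarith : (0:ℝ) ≤ 2*((n:ℝ)-e) - (2*(N:ℝ)+k+1)),
          mul_nonneg (by positivity : (0:ℝ) ≤ (N:ℝ)^2) (by nlinarith : (0:ℝ) ≤ ((3*(k:ℝ)+1)/2)^2 - ((e:ℝ)+k+1)^2)]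
      have hB1 : (1:ℝ) ≤ B := by linarith
      rcases Nat.eq_zero_or_pos m' with rfl | hm'pos
      · -- m = 2, k ≤ 3
        have hk3 : k ≤ 3 := by omega
        have hN2 : 2 ≤ N := by omega
        have hxge : (4:ℝ)/3 ≤ x := by
          rw [hx, le_div_iff₀ hkR]
          have : (k:ℝ) ≤ 3 := by exact_mod_cast hk3
          have h2 : (2:ℝ) ≤ (N:ℝ) := by exact_mod_cast hN2
          nlinarith
        have hB2 : ((189:ℝ)/100)^2 ≤ B^2 := by
          apply pow_le_pow_left₀ (by norm_num) hBge
        calc (4:ℝ) ≤ ((189:ℝ)/100)^2 * (4/3) := by norm_num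
          _ ≤ B^2 * x := by
              apply mul_le_mul hB2 hxge (by norm_num) (by positivity)
          _ = B^(0+2) * x := by norm_num
      · -- m ≥ 3
        have hB3 : ((189:ℝ)/100)^3 ≤ B^3 := by
          apply pow_le_pow_left₀ (by norm_num) hBge
        have hBm : B^3 ≤ B^(m'+2) := by
          apply pow_le_pow_right₀ hB1 (by omega)
        have hxge : ((k:ℝ)+1)/k ≤ x := by
          rw [hx, div_le_div_iff₀ hkR hkR]
          nlinarith
        have hxg1 : (1:ℝ) < ((k:ℝ)+1)/k := by
          rw [lt_div_iff₀ hkR]; linarith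
        calc (4:ℝ) ≤ ((189:ℝ)/100)^3 * 1 := by norm_num
          _ ≤ ((189:ℝ)/100)^3 * (((k:ℝ)+1)/k) := by
              apply mul_le_mul_of_nonneg_left (le_of_lt hxg1) (by norm_num)
          _ ≤ B^(m'+2) * x := by
              apply mul_le_mul (le_trans hB3 hBm) hxge (by positivity) (by positivity)
    · -- N ≥ 2k : B ≥ 1 and x ≥ 4
      have hB1 : (1:ℝ) ≤ B := by
        rw [hB, hA, div_mul_eq_mul_div, div_div, le_div_iff₀ (by positivity), one_mul]
        have f1 : (N:ℝ)+1 ≤ (n:ℝ) - e := by rw [hnc]; linarith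
        have f2 : (e:ℝ)+k+1 ≤ 2*(k:ℝ) := by linarith
        have t1 : ((e:ℝ)+k+1)^2 ≤ (2*(k:ℝ))^2 := by nlinarith
        have t2 : ((e:ℝ)+k+1)^2*(N:ℝ)^2 ≤ (2*(k:ℝ))^2*(N:ℝ)^2 :=
          mul_le_mul_of_nonneg_right t1 (sq_nonneg _)
        have t4 : (2*(k:ℝ))^2*(N:ℝ)^2 ≤ 4*(k:ℝ)^2*(((N:ℝ)+1)*((N:ℝ)+1)) := by nlinarith
        have t5 : 4*(k:ℝ)^2*(((N:ℝ)+1)*((N:ℝ)+1)) ≤ 4*((n:ℝ)-e)*((N:ℝ)+1)*(k:ℝ)^2 := by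
          have := mul_le_mul_of_nonneg_right f1 (by positivity : (0:ℝ) ≤ (N:ℝ)+1)
          nlinarith [sq_nonneg (k:ℝ)]
        nlinarith [t2, t4, t5]
      have hxge : (4:ℝ) ≤ x := by
        rw [hx, le_div_iff₀ hkR]
        have : (2*k : ℝ) ≤ (N:ℝ) := by exact_mod_cast hcase
        linarith
      calc (4:ℝ) ≤ 1 * 4 := by norm_num
        _ ≤ B^(m'+2) * x := by
            refine mul_le_mul ?_ hxge (by norm_num) (by positivity)
            simpa using pow_le_pow_left₀ (by norm_num : (0:ℝ) ≤ 1) hB1 (m'+2)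
  -- final algebra
  have hsq := sq_ratio_ge (n := n) (e := e) (k := k) (N := N) (by omega) hn (by omega)
  have hC : (B*x^2/4)^(m'+2) ≤ ((n.choose k : ℝ) / (n.choose e : ℝ))^2 := by
    rw [← hAB, ← hm']
    exact hsq
  have hfin := alg_aux x B _ m' hxpos hcore hC
  have hexp1 : 2*(k-e)-1 = 2*m'+3 := by omega
  have hexp2 : (k-e)-1 = m'+1 := by omega
  rw [hexp1, hexp2]
  exact hfin

set_option maxHeartbeats 1000000 in
/-- Sparse packing set (Lemma on the packing construction):
for `3 ≤ s ≤ d` and `r, δ > 0` there exist `M` vectors in `ℝ^d`, each with exactly `s`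
nonzero coordinates and squared norm `r² + 2δ²`, pairwise squared distances in `[δ², 8δ²]`,
and `log M ≥ ((s−1)/2)·log((d−s)/((s−1)/2))`. -/
theorem sparse_packing_set (d s : ℕ) (r δ : ℝ) (hs : 3 ≤ s) (hsd : s ≤ d)
    (hr : 0 < r) (hδ : 0 < δ) :
    ∃ (M : ℕ) (α : Fin M → Fin d → ℝ), 0 < M ∧
      (∀ i, (Finset.univ.filter fun j => α i j ≠ 0).card = s) ∧
      (∀ i, ∑ j, (α i j) ^ 2 = r ^ 2 + 2 * δ ^ 2) ∧
      (∀ i j, i ≠ j →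
        δ ^ 2 ≤ ∑ k, (α i k - α j k) ^ 2 ∧ ∑ k, (α i k - α j k) ^ 2 ≤ 8 * δ ^ 2) ∧
      ((s : ℝ) - 1) / 2 * Real.log (((d : ℝ) - s) / (((s : ℝ) - 1) / 2)) ≤ Real.log M := by
  obtain ⟨k, rfl⟩ : ∃ k, s = k + 1 := ⟨s - 1, by omega⟩
  obtain ⟨n, rfl⟩ : ∃ n, d = n + 1 := ⟨d - 1, by omega⟩
  have hk2 : 2 ≤ k := by omega
  have hkn : k ≤ n := by omega
  set N : ℕ := n - k with hNdef
  have hnNk : n = N + k := by omega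
  set e : ℕ := (k - 1) / 2 with hedef
  have he1 : 2 * e + 1 ≤ k := by omega
  have he2 : k ≤ 2 * (e + 1) := by omega
  -- the ternary code set
  set T : Finset (Fin n → Fin 3) :=
    univ.filter (fun g => (univ.filter fun i => g i ≠ 0).card = k) with hTdef
  have hTne : T.Nonempty := by
    refine ⟨fun i => if (i : ℕ) < k then 1 else 0, ?_⟩
    rw [hTdef, Finset.mem_filter]
    refine ⟨mem_univ _, ?_⟩
    have : (univ.filter fun i : Fin n => (if (i : ℕ) < k then (1:Fin 3) else 0) ≠ 0)
        = univ.filter (fun i : Fin n => (i : ℕ) < k) := by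
      apply Finset.filter_congr
      intro i _
      by_cases h : (i : ℕ) < k <;> simp [h]
    rw [this]
    have h2 : univ.filter (fun i : Fin n => (i:ℕ) < k)
        = (univ : Finset (Fin k)).map (Fin.castLEEmb hkn) := by
      ext i
      simp only [Finset.mem_filter, mem_univ, true_and, Finset.mem_map]
      constructor
      · intro h
        exact ⟨⟨(i:ℕ), h⟩, rfl⟩
      · rintro ⟨j, -, rfl⟩
        simpa using j.2
    rw [h2, Finset.card_map, Finset.card_univ, Fintype.card_fin]
  obtain ⟨S, hST, hSne, hSpair, hcov⟩ := exists_packing e T hTne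
  set M := S.card with hMdef
  have hM : 0 < M := Finset.card_pos.mpr hSne
  have hkR : (0:ℝ) < k := by
    have : (0:ℕ) < k := by omega
    exact_mod_cast this
  set c : ℝ := Real.sqrt (2 / (k:ℝ)) * δ with hcdef
  have hc2 : c ^ 2 = 2 / (k:ℝ) * δ ^ 2 := by
    rw [hcdef, mul_pow, Real.sq_sqrt (by positivity)]
  have hcpos : 0 < c := by
    rw [hcdef]
    have : (0:ℝ) < 2 / (k:ℝ) := by positivity
    positivity
  set val : Fin 3 → ℝ := ![0, 1, -1] with hvdef
  have hval0 : ∀ a : Fin 3, a ≠ 0 → val a ≠ 0 := by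
    intro a ha
    fin_cases a
    · exact absurd rfl ha
    · norm_num [hvdef]
    · norm_num [hvdef]
  have hvalsq' : ∀ a : Fin 3, val a ^ 2 = if a = 0 then 0 else 1 := by
    intro a
    fin_cases a <;> simp [hvdef, Fin.ext_iff] <;> norm_num
  have hdge : ∀ a b : Fin 3, a ≠ b → 1 ≤ (val a - val b)^2 := by
    intro a b hab
    fin_cases a <;> fin_cases b <;>
      first
        | (exfalso; exact hab rfl)
        | norm_num [hvdef]
  have hdle : ∀ a b : Fin 3, (val a - val b)^2 ≤ 2*(val a)^2 + 2*(val b)^2 := by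
    intro a b
    nlinarith [sq_nonneg (val a + val b)]
  set σf : Fin M → (Fin n → Fin 3) :=
    fun i => ((S.equivFin.symm i : {x // x ∈ S}) : Fin n → Fin 3) with hσdef
  have hσS : ∀ i, σf i ∈ S := fun i => (S.equivFin.symm i).2
  have hσT : ∀ i, σf i ∈ T := fun i => hST (hσS i)
  have hσw : ∀ i, (univ.filter fun j => σf i j ≠ 0).card = k := by
    intro i
    have := hσT i
    rw [hTdef, Finset.mem_filter] at this
    exact this.2
  have hσne : ∀ i j : Fin M, i ≠ j → σf i ≠ σf j := by
    intro i j hij h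
    apply hij
    have h2 : S.equivFin.symm i = S.equivFin.symm j := Subtype.ext h
    have := congrArg S.equivFin h2
    simpa using this
  have hvalsum : ∀ i : Fin M, ∑ j : Fin n, (val (σf i j))^2 = (k:ℝ) := by
    intro i
    calc ∑ j : Fin n, (val (σf i j))^2
        = ∑ j : Fin n, (if σf i j ≠ 0 then (1:ℝ) else 0) := by
          apply Finset.sum_congr rfl
          intro j _
          rw [hvalsq']
          by_cases h : σf i j = 0 <;> simp [h]
      _ = ((univ.filter fun j => σf i j ≠ 0).card : ℝ) := by
          rw [Finset.sum_boole]
      _ = (k:ℝ) := by rw [hσw]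
  refine ⟨M, fun i => Fin.cons r (fun j => c * val (σf i j)), hM, ?_, ?_, ?_, ?_⟩
  · -- exactly s = k+1 nonzero coordinates
    intro i
    rw [Fin.card_filter_univ_succ']
    simp only [Fin.cons_zero, Fin.cons_succ]
    rw [if_pos hr.ne']
    have hfc : (univ.filter fun j : Fin n => c * val (σf i j) ≠ 0).card = k := by
      rw [← hσw i]
      apply congrArg
      apply Finset.filter_congr
      intro j _
      constructor
      · intro h hc0
        exact h (by rw [hc0]; simp [hvdef])
      · intro h
        exact mul_ne_zero (ne_of_gt hcpos) (hval0 _ h)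
    rw [hfc]
    omega
  · -- squared norm
    intro i
    rw [Fin.sum_univ_succ]
    simp only [Fin.cons_zero, Fin.cons_succ]
    have h1 : ∑ j : Fin n, (c * val (σf i j))^2 = c^2 * ∑ j : Fin n, (val (σf i j))^2 := by
      rw [Finset.mul_sum]
      apply Finset.sum_congr rfl
      intro j _
      ring
    rw [h1, hvalsum, hc2]
    field_simp
  · -- distances
    intro i j hij
    have hd := hSpair _ (hσS i) _ (hσS j) (hσne i j hij)
    rw [Fin.sum_univ_succ]
    simp only [Fin.cons_zero, Fin.cons_succ]
    have hsplit : ∀ x : Fin n, (c * val (σf i x) - c * val (σf j x))^2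
        = c^2 * (val (σf i x) - val (σf j x))^2 := by intro x; ring
    constructor
    · -- lower bound
      have hBig : ((e:ℝ)+1) ≤ ∑ x : Fin n, (val (σf i x) - val (σf j x))^2 := by
        set D := (univ.filter fun x : Fin n => σf i x ≠ σf j x) with hD
        calc ((e:ℝ)+1) = ((e+1 : ℕ):ℝ) := by push_cast; ring
          _ ≤ (D.card : ℝ) := by exact_mod_cast hd
          _ = ∑ x ∈ D, (1:ℝ) := by rw [Finset.sum_const, nsmul_eq_mul, mul_one]
          _ ≤ ∑ x ∈ D, (val (σf i x) - val (σf j x))^2 := by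
              apply Finset.sum_le_sum
              intro x hx
              rw [hD, Finset.mem_filter] at hx
              exact hdge _ _ hx.2
          _ ≤ ∑ x : Fin n, (val (σf i x) - val (σf j x))^2 := by
              apply Finset.sum_le_sum_of_subset_of_nonneg (Finset.subset_univ _)
              intro x _ _
              positivity
      calc δ^2 ≤ c^2 * ((e:ℝ)+1) := by
            rw [hc2]
            have hke : (k:ℝ) ≤ 2*((e:ℝ)+1) := by exact_mod_cast he2
            rw [div_mul_eq_mul_div, div_mul_eq_mul_div, le_div_iff₀ hkR]
            nlinarith [sq_nonneg δ]
        _ ≤ c^2 * ∑ x : Fin n, (val (σf i x) - val (σf j x))^2 :=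
            mul_le_mul_of_nonneg_left hBig (by positivity)
        _ = (r - r)^2 + ∑ x : Fin n, (c * val (σf i x) - c * val (σf j x))^2 := by
            rw [Finset.mul_sum]
            rw [Finset.sum_congr rfl (fun x _ => (hsplit x).symm)]
            ring
    · -- upper bound
      have hBig : ∑ x : Fin n, (val (σf i x) - val (σf j x))^2 ≤ 4*(k:ℝ) := by
        calc ∑ x : Fin n, (val (σf i x) - val (σf j x))^2
            ≤ ∑ x : Fin n, (2*(val (σf i x))^2 + 2*(val (σf j x))^2) :=
              Finset.sum_le_sum (fun x _ => hdle _ _)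
          _ = 2*(∑ x : Fin n, (val (σf i x))^2) + 2*(∑ x : Fin n, (val (σf j x))^2) := by
              rw [Finset.sum_add_distrib, Finset.mul_sum, Finset.mul_sum]
          _ = 4*(k:ℝ) := by rw [hvalsum, hvalsum]; ring
      calc (r - r)^2 + ∑ x : Fin n, (c * val (σf i x) - c * val (σf j x))^2
          = c^2 * ∑ x : Fin n, (val (σf i x) - val (σf j x))^2 := by
            rw [Finset.mul_sum]
            rw [Finset.sum_congr rfl (fun x _ => (hsplit x).symm)]
            ring
        _ ≤ c^2 * (4*(k:ℝ)) := mul_le_mul_of_nonneg_left hBig (by positivity)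
        _ = 8 * δ^2 := by
            rw [hc2]
            field_simp
            ring
  · -- the log bound
    have hTcard : T.card = n.choose k * 2^k := by
      rw [hTdef]
      exact count_dist_eq (fun _ => 0) k
    have hcount : T.card ≤ M * (2^(e+1) * n.choose e) := by
      have hsub : T ⊆ S.biUnion (fun σ0 =>
          univ.filter (fun g => (univ.filter fun i => g i ≠ σ0 i).card ≤ e)) := by
        intro τ hτ
        obtain ⟨σ0, hσ0, hdist⟩ := hcov τ hτ
        rw [Finset.mem_biUnion]
        refine ⟨σ0, hσ0, Finset.mem_filter.mpr ⟨mem_univ _, ?_⟩⟩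
        rw [diff_comm]
        exact hdist
      calc T.card ≤ _ := Finset.card_le_card hsub
        _ ≤ ∑ σ0 ∈ S, (univ.filter (fun g : Fin n → Fin 3 =>
              (univ.filter fun i => g i ≠ σ0 i).card ≤ e)).card := Finset.card_biUnion_le
        _ ≤ ∑ _σ0 ∈ S, 2^(e+1) * n.choose e :=
            Finset.sum_le_sum (fun σ0 _ => ball_card_le σ0 e (by omega))
        _ = M * (2^(e+1) * n.choose e) := by
            rw [Finset.sum_const, smul_eq_mul]
    have hcast1 : ((k+1:ℕ):ℝ) - 1 = (k:ℝ) := by push_cast; ring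
    have hNreal : ((n+1:ℕ):ℝ) - ((k+1:ℕ):ℝ) = (N:ℝ) := by
      have : (n:ℝ) = (N:ℝ) + (k:ℝ) := by exact_mod_cast hnNk
      push_cast
      linarith
    rw [hcast1, hNreal]
    have hy' : (N:ℝ)/((k:ℝ)/2) = 2*(N:ℝ)/(k:ℝ) := by
      field_simp
    rw [hy']
    rcases le_or_gt (2*N) k with hsmall | hbig
    · -- trivial regime
      have h1 : Real.log (2*(N:ℝ)/k) ≤ 0 := by
        apply Real.log_nonpos (by positivity)
        rw [div_le_one hkR]
        exact_mod_cast hsmall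
      have h2 : (0:ℝ) ≤ Real.log M := Real.log_nonneg (by exact_mod_cast hM)
      have h3 : (0:ℝ) ≤ (k:ℝ)/2 := by positivity
      nlinarith [mul_nonneg h3 (neg_nonneg.mpr h1)]
    · -- main regime
      have hce : (0:ℝ) < (n.choose e : ℝ) := by
        exact_mod_cast Nat.choose_pos (show e ≤ n by omega)
      have hck : (0:ℝ) < (n.choose k : ℝ) := by
        exact_mod_cast Nat.choose_pos hkn
      set y : ℝ := 2*(N:ℝ)/(k:ℝ) with hydef
      have hypos : (0:ℝ) < y := by
        rw [hydef]
        have : (0:ℕ) < N := by omega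
        have hN0 : (0:ℝ) < (N:ℝ) := by exact_mod_cast this
        positivity
      have hy1 : 1 ≤ y := by
        rw [hydef, le_div_iff₀ hkR]
        have : (k:ℝ) + 1 ≤ 2*(N:ℝ) := by exact_mod_cast hbig
        linarith
      set X : ℝ := 2^(k-e-1) * ((n.choose k : ℝ) / (n.choose e : ℝ)) with hXdef
      have hXpos : 0 < X := by
        rw [hXdef]
        positivity
      have hMX : X ≤ (M:ℝ) := by
        have h1 : (n.choose k * 2^k : ℕ) ≤ M * (2^(e+1) * n.choose e) := by
          rw [← hTcard]; exact hcount
        have h2 : ((n.choose k : ℝ)) * 2^k ≤ (M:ℝ) * (2^(e+1) * (n.choose e : ℝ)) := by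
          exact_mod_cast h1
        have hpow : (2:ℝ)^(e+1) * 2^(k-e-1) = 2^k := by
          rw [← pow_add]
          congr 1
          omega
        have hP : (0:ℝ) < (2:ℝ)^(e+1) := by positivity
        have hgoal : (2:ℝ)^(k-e-1) * ((n.choose k : ℝ) / (n.choose e : ℝ))
            = ((2:ℝ)^(k-e-1) * (n.choose k : ℝ)) / (n.choose e : ℝ) := by ring
        rw [hXdef, hgoal, div_le_iff₀ hce]
        refine (mul_le_mul_iff_right₀ hP).mp ?_
        calc (2:ℝ)^(e+1) * ((2:ℝ)^(k-e-1) * (n.choose k : ℝ))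
            = (n.choose k : ℝ) * 2^k := by rw [← hpow]; ring
          _ ≤ (M:ℝ) * (2^(e+1) * (n.choose e : ℝ)) := h2
          _ = (2:ℝ)^(e+1) * ((M:ℝ) * (n.choose e : ℝ)) := by ring
      have hkey := key_ineq (N:=N) (k:=k) (e:=e) hk2 he1 (by omega)
      rw [← hnNk] at hkey
      have hX2 : y^(2*(k-e)-1 : ℕ) ≤ X^2 := by
        rw [hXdef, mul_pow, ← pow_mul]
        have h4 : (2:ℝ)^((k-e-1)*2) = 4^(k-e-1) := by
          rw [show (4:ℝ) = 2^2 from by norm_num, ← pow_mul, Nat.mul_comm]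
        rw [h4]
        exact hkey
      have hsq1 : (y^(((k-e:ℕ):ℝ) - 1/2))^2 = y^(2*(k-e)-1 : ℕ) := by
        have h5 : (y^(((k-e:ℕ):ℝ) - 1/2))^2 = y^(((((k-e:ℕ):ℝ) - 1/2))*2) := by
          rw [← Real.rpow_natCast (y ^ ((((k-e:ℕ):ℝ)) - 1/2)) 2, ← Real.rpow_mul hypos.le]
          norm_num
        rw [h5]
        rw [show ((((k-e:ℕ):ℝ)) - 1/2)*2 = ((2*(k-e)-1 : ℕ):ℝ) from by
          have h6 : (1:ℕ) ≤ 2*(k-e) := by omega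
          push_cast [h6]
          ring]
        rw [Real.rpow_natCast]
      have hyX : y^(((k-e:ℕ):ℝ) - 1/2) ≤ X := by
        have h6 : (y^(((k-e:ℕ):ℝ) - 1/2))^2 ≤ X^2 := by rw [hsq1]; exact hX2
        have h7 := Real.sqrt_le_sqrt h6
        rwa [Real.sqrt_sq (Real.rpow_nonneg hypos.le _), Real.sqrt_sq hXpos.le] at h7
      have hfin : y^((k:ℝ)/2) ≤ (M:ℝ) := by
        refine le_trans (le_trans ?_ hyX) hMX
        apply Real.rpow_le_rpow_of_exponent_le hy1
        have h8 : (k:ℝ) + 1 ≤ 2*((k-e:ℕ):ℝ) := by exact_mod_cast (show k+1 ≤ 2*(k-e) by omega)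
        linarith
      calc (k:ℝ)/2 * Real.log y = Real.log (y^((k:ℝ)/2)) := (Real.log_rpow hypos _).symm
        _ ≤ Real.log M := Real.log_le_log (Real.rpow_pos_of_pos hypos _) hfin
end

section
/- Deterministic ℓ2 error bound for OLS after correct screening: let Z ∈ ℝ^{n×d}, θ ∈ ℝ^d with support S nonempty, and let λ^OPT > 0. Suppose Ŝ satisfies {j : |θ_j| > 2λ^OPT} ⊆ Ŝ ⊆ S, and suppose a ≤ λ_min((ZᵀZ/n)_{S,S}) ≤ λ_max((ZᵀZ/n)_{S,S}) ≤ b for some 0 < a < b. Let θ̂ be defined by θ̂_Ŝ = (Z_ŜᵀZ_Ŝ)^{-1} Z_Ŝᵀ Y with Y = Zθ + ε, and θ̂_j = 0 for j ∉ Ŝ. Then ‖θ̂ − θ‖_2² ≤ (2b/a + 1)·Σ_{j∈S} θ_j² 𝟙{|θ_j| ≤ 2λ^OPT} + (2/a²)·‖Z_Sᵀε/n‖_2². -/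
open Finset Matrix

/-- The submatrix of `Z` keeping only the columns indexed by the finite set `A`. -/
def colSub {n d : ℕ} (Z : Matrix (Fin n) (Fin d) ℝ) (A : Finset (Fin d)) :
    Matrix (Fin n) {j // j ∈ A} ℝ := fun i j => Z i j.1

lemma colSub_transpose_mulVec_apply {n d : ℕ} (Z : Matrix (Fin n) (Fin d) ℝ)
    (A : Finset (Fin d)) (x : Fin n → ℝ) (j : {j // j ∈ A}) :
    (colSub Z A)ᵀ.mulVec x j = ∑ i, Z i j.1 * x i := by
  simp [Matrix.mulVec, dotProduct, colSub, Matrix.transpose_apply]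

lemma colSub_mulVec_eq {n d : ℕ} (Z : Matrix (Fin n) (Fin d) ℝ) (A : Finset (Fin d))
    (w : Fin d → ℝ) (hw : ∀ j ∉ A, w j = 0) :
    (colSub Z A).mulVec (fun k : {j // j ∈ A} => w k.1) = Z.mulVec w := by
  funext i
  show ∑ k : {j // j ∈ A}, Z i k.1 * w k.1 = ∑ k : Fin d, Z i k * w k
  rw [Finset.sum_coe_sort A (fun k => Z i k * w k)]
  exact Finset.sum_subset (Finset.subset_univ A) (fun x _ hx => by rw [hw x hx, mul_zero])

lemma key_alg (a b U V E q Qv s t : ℝ) (ha : 0 < a) (hb : 0 < b)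
    (hU : 0 ≤ U) (hV : 0 ≤ V) (hE : 0 ≤ E) (hq : 0 ≤ q) (hQv : 0 ≤ Qv)
    (hs : s ^ 2 ≤ U * E) (ht : t ^ 2 ≤ q * Qv) (hQvb : Qv ≤ b * V) (haU : a * U ≤ q)
    (hqe : q = s - t) :
    a ^ 2 * U ≤ 2 * E + 2 * a * b * V := by
  have hbV : (0:ℝ) ≤ b * V := mul_nonneg hb.le hV
  have hs' : s ≤ Real.sqrt U * Real.sqrt E := by
    calc s ≤ |s| := le_abs_self s
    _ = Real.sqrt (s ^ 2) := (Real.sqrt_sq_eq_abs s).symm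
    _ ≤ Real.sqrt (U * E) := Real.sqrt_le_sqrt hs
    _ = Real.sqrt U * Real.sqrt E := Real.sqrt_mul hU E
  have ht' : -t ≤ Real.sqrt q * Real.sqrt (b * V) := by
    calc -t ≤ |t| := neg_le_abs t
    _ = Real.sqrt (t ^ 2) := (Real.sqrt_sq_eq_abs t).symm
    _ ≤ Real.sqrt (q * (b * V)) :=
        Real.sqrt_le_sqrt (le_trans ht (mul_le_mul_of_nonneg_left hQvb hq))
    _ = Real.sqrt q * Real.sqrt (b * V) := Real.sqrt_mul hq _
  have hUq : Real.sqrt U ≤ Real.sqrt q / Real.sqrt a := by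
    rw [le_div_iff₀ (Real.sqrt_pos.mpr ha)]
    calc Real.sqrt U * Real.sqrt a = Real.sqrt (a * U) := by
          rw [Real.sqrt_mul ha.le, mul_comm]
    _ ≤ Real.sqrt q := Real.sqrt_le_sqrt haU
  set c : ℝ := Real.sqrt E / Real.sqrt a + Real.sqrt (b * V) with hc
  have hcnn : 0 ≤ c := by positivity
  have h3 : q ≤ Real.sqrt q * c := by
    have hE' : Real.sqrt U * Real.sqrt E ≤ Real.sqrt q / Real.sqrt a * Real.sqrt E :=
      mul_le_mul_of_nonneg_right hUq (Real.sqrt_nonneg E)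
    have : q ≤ Real.sqrt q / Real.sqrt a * Real.sqrt E + Real.sqrt q * Real.sqrt (b * V) := by
      linarith [hqe.le]
    calc q ≤ _ := this
    _ = Real.sqrt q * c := by rw [hc]; ring
  have h4 : Real.sqrt q ≤ c := by
    rcases eq_or_lt_of_le (Real.sqrt_nonneg q) with h | h
    · rw [← h]; exact hcnn
    · have h3' : Real.sqrt q * Real.sqrt q ≤ Real.sqrt q * c := by
        rw [Real.mul_self_sqrt hq]; exact h3
      exact le_of_mul_le_mul_left h3' h
  have h5 : q ≤ c ^ 2 := by
    calc q = Real.sqrt q ^ 2 := (Real.sq_sqrt hq).symm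
    _ ≤ c ^ 2 := pow_le_pow_left₀ (Real.sqrt_nonneg q) h4 2
  have hc2 : c ^ 2 ≤ 2 * (E / a) + 2 * (b * V) := by
    have e1 : (Real.sqrt E / Real.sqrt a) ^ 2 = E / a := by
      rw [div_pow, Real.sq_sqrt hE, Real.sq_sqrt ha.le]
    have e2 : Real.sqrt (b * V) ^ 2 = b * V := Real.sq_sqrt hbV
    have := sq_nonneg (Real.sqrt E / Real.sqrt a - Real.sqrt (b * V))
    rw [hc]
    nlinarith [this, e1, e2]
  have h6 : a * U ≤ 2 * (E / a) + 2 * (b * V) := le_trans haU (le_trans h5 hc2)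
  have h7 := mul_le_mul_of_nonneg_left h6 ha.le
  have hEa : a * (E / a) = E := by field_simp
  nlinarith [h7, hEa]

/-- Deterministic ℓ₂ error bound for OLS after correct screening:
if `{j : |θ_j| > 2λ} ⊆ Ŝ ⊆ S` (`S` the support of `θ`, nonempty), the eigenvalues of
`(ZᵀZ/n)_{S,S}` lie in `[a, b]` with `0 < a < b`, and `θ̂` is the OLS estimator on `Ŝ`
(zero off `Ŝ`) for `Y = Zθ + ε`, then
`‖θ̂ − θ‖₂² ≤ (2b/a + 1)·∑_{j∈S} θ_j² 𝟙{|θ_j| ≤ 2λ} + (2/a²)·‖Z_Sᵀε/n‖₂²`. -/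
theorem ols_post_threshold_l2_bound {n d : ℕ} (hn : 0 < n)
    (Z : Matrix (Fin n) (Fin d) ℝ) (θ : Fin d → ℝ) (lam : ℝ) (hlam : 0 < lam)
    (S Shat : Finset (Fin d))
    (hSdef : ∀ j, j ∈ S ↔ θ j ≠ 0) (hSne : S.Nonempty)
    (hstr : ∀ j, 2 * lam < |θ j| → j ∈ Shat) (hsub : Shat ⊆ S)
    (a b : ℝ) (ha : 0 < a) (hab : a < b)
    (heig : ∀ v : {j // j ∈ S} → ℝ,
      a * ∑ j, (v j) ^ 2 ≤
          v ⬝ᵥ ((1 / (n : ℝ)) • ((colSub Z S)ᵀ * colSub Z S)).mulVec v ∧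
        v ⬝ᵥ ((1 / (n : ℝ)) • ((colSub Z S)ᵀ * colSub Z S)).mulVec v ≤
          b * ∑ j, (v j) ^ 2)
    (hinv : IsUnit ((colSub Z Shat)ᵀ * colSub Z Shat))
    (ε Y : Fin n → ℝ) (hY : Y = Z.mulVec θ + ε)
    (θhat : Fin d → ℝ) (hθhat0 : ∀ j, j ∉ Shat → θhat j = 0)
    (hθhatS : (fun j : {j // j ∈ Shat} => θhat j.1) =
      ((colSub Z Shat)ᵀ * colSub Z Shat)⁻¹.mulVec ((colSub Z Shat)ᵀ.mulVec Y)) :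
    ∑ j, (θhat j - θ j) ^ 2 ≤
      (2 * b / a + 1) *
          ∑ j ∈ S, (θ j) ^ 2 * (if |θ j| ≤ 2 * lam then (1 : ℝ) else 0) +
        (2 / a ^ 2) * ∑ j : {j // j ∈ S}, ((colSub Z S)ᵀ.mulVec ε j / n) ^ 2 := by
  classical
  subst hY
  have hθ0 : ∀ j, j ∉ S → θ j = 0 := fun j hj => by
    by_contra h; exact hj ((hSdef j).mpr h)
  have hb : (0:ℝ) < b := lt_trans ha hab
  set M : Matrix {j // j ∈ S} {j // j ∈ S} ℝ :=
    (1 / (n : ℝ)) • ((colSub Z S)ᵀ * colSub Z S) with hMdef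
  set δ : {j // j ∈ S} → ℝ := fun j => θhat j.1 - θ j.1 with hδdef
  set u : {j // j ∈ S} → ℝ := fun j => if j.1 ∈ Shat then δ j else 0 with hudef
  set v : {j // j ∈ S} → ℝ := fun j => if j.1 ∈ Shat then 0 else δ j with hvdef
  set η : {j // j ∈ S} → ℝ := fun j => (colSub Z S)ᵀ.mulVec ε j / n with hηdef
  -- quadratic form is nonnegative
  have hQnn : ∀ x : {j // j ∈ S} → ℝ, 0 ≤ x ⬝ᵥ M.mulVec x := fun x =>
    le_trans (mul_nonneg ha.le (Finset.sum_nonneg fun _ _ => sq_nonneg _)) (heig x).1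
  -- symmetry of the bilinear form
  have hexpand : ∀ x y : {j // j ∈ S} → ℝ,
      x ⬝ᵥ M.mulVec y = ∑ j, ∑ k, x j * (M j k * y k) := by
    intro x y
    simp [dotProduct, Matrix.mulVec, Finset.mul_sum]
  have hMe : ∀ j k, M j k = M k j := by
    intro j k
    simp only [hMdef, Matrix.smul_apply, Matrix.mul_apply, Matrix.transpose_apply, colSub,
      smul_eq_mul]
    congr 1
    exact Finset.sum_congr rfl fun i _ => mul_comm _ _
  have hBsym : ∀ x y : {j // j ∈ S} → ℝ, x ⬝ᵥ M.mulVec y = y ⬝ᵥ M.mulVec x := by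
    intro x y
    rw [hexpand, hexpand, Finset.sum_comm]
    refine Finset.sum_congr rfl fun j _ => Finset.sum_congr rfl fun k _ => ?_
    rw [hMe k j]; ring
  -- Cauchy-Schwarz for the quadratic form
  have hCS : ∀ x y : {j // j ∈ S} → ℝ,
      (x ⬝ᵥ M.mulVec y) ^ 2 ≤ (x ⬝ᵥ M.mulVec x) * (y ⬝ᵥ M.mulVec y) := by
    intro x y
    have key : ∀ t : ℝ, 0 ≤ (y ⬝ᵥ M.mulVec y) * (t * t) + (2 * (x ⬝ᵥ M.mulVec y)) * t
        + x ⬝ᵥ M.mulVec x := by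
      intro t
      have h0 := hQnn (t • y + x)
      have hexp : (t • y + x) ⬝ᵥ M.mulVec (t • y + x)
          = (y ⬝ᵥ M.mulVec y) * (t * t) + (2 * (x ⬝ᵥ M.mulVec y)) * t + x ⬝ᵥ M.mulVec x := by
        simp only [Matrix.mulVec_add, Matrix.mulVec_smul, dotProduct_add,
          add_dotProduct, smul_dotProduct, dotProduct_smul, smul_eq_mul]
        linear_combination (t : ℝ) * hBsym y x
      exact hexp ▸ h0
    have hd := discrim_le_zero key
    rw [discrim] at hd
    nlinarith [hd]
  -- restriction identities
  have hδrest : (colSub Z S).mulVec δ = Z.mulVec θhat - Z.mulVec θ := by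
    have h0 : ∀ j, j ∉ S → (θhat - θ) j = 0 := by
      intro j hj
      have : θhat j = 0 := hθhat0 j (fun h => hj (hsub h))
      simp [Pi.sub_apply, this, hθ0 j hj]
    have := colSub_mulVec_eq Z S (θhat - θ) h0
    rw [Matrix.mulVec_sub] at this
    exact this
  -- normal equations
  have hdet : IsUnit ((colSub Z Shat)ᵀ * colSub Z Shat).det :=
    (Matrix.isUnit_iff_isUnit_det _).mp hinv
  have hZθhat : (colSub Z Shat).mulVec (fun k : {j // j ∈ Shat} => θhat k.1) = Z.mulVec θhat :=
    colSub_mulVec_eq Z Shat θhat hθhat0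
  have hfit : ((colSub Z Shat)ᵀ * colSub Z Shat).mulVec (fun j : {j // j ∈ Shat} => θhat j.1)
      = (colSub Z Shat)ᵀ.mulVec (Z.mulVec θ + ε) := by
    rw [hθhatS, Matrix.mulVec_mulVec, Matrix.mul_nonsing_inv _ hdet, Matrix.one_mulVec]
  have hfit2 : (colSub Z Shat)ᵀ.mulVec (Z.mulVec θhat)
      = (colSub Z Shat)ᵀ.mulVec (Z.mulVec θ + ε) := by
    rw [← hZθhat, Matrix.mulVec_mulVec, hfit]
  have hNE0 : ∀ j, ∀ hj : j ∈ Shat,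
      ∑ i, Z i j * (Z.mulVec θhat i - Z.mulVec θ i) = ∑ i, Z i j * ε i := by
    intro j hj
    have h1 := congrFun hfit2 ⟨j, hj⟩
    rw [colSub_transpose_mulVec_apply, colSub_transpose_mulVec_apply] at h1
    have h2 : ∑ i, Z i j * ((Z.mulVec θ + ε) i) =
        ∑ i, Z i j * Z.mulVec θ i + ∑ i, Z i j * ε i := by
      rw [← Finset.sum_add_distrib]
      exact Finset.sum_congr rfl fun i _ => by simp [Pi.add_apply, mul_add]
    rw [h2] at h1
    rw [show ∑ i, Z i j * (Z.mulVec θhat i - Z.mulVec θ i)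
        = ∑ i, Z i j * Z.mulVec θhat i - ∑ i, Z i j * Z.mulVec θ i by
      rw [← Finset.sum_sub_distrib]; exact Finset.sum_congr rfl fun i _ => by ring]
    rw [h1]
    ring
  have hMδ : ∀ j : {j // j ∈ S},
      M.mulVec δ j = (1 / (n:ℝ)) * ∑ i, Z i j.1 * (Z.mulVec θhat i - Z.mulVec θ i) := by
    intro j
    have : M.mulVec δ = (1 / (n:ℝ)) • ((colSub Z S)ᵀ.mulVec ((colSub Z S).mulVec δ)) := by
      rw [hMdef, Matrix.smul_mulVec, Matrix.mulVec_mulVec]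
    rw [this, Pi.smul_apply, smul_eq_mul, hδrest, colSub_transpose_mulVec_apply]
    rfl
  have hNE : ∀ j : {j // j ∈ S}, j.1 ∈ Shat → M.mulVec δ j = η j := by
    intro j hj
    rw [hMδ j, hNE0 j.1 hj]
    show _ = ((colSub Z S)ᵀ.mulVec ε) j / (n : ℝ)
    rw [colSub_transpose_mulVec_apply]
    ring
  -- dot product identity
  have hBuδ : u ⬝ᵥ M.mulVec δ = ∑ j, u j * η j := by
    show ∑ j, u j * M.mulVec δ j = ∑ j, u j * η j
    refine Finset.sum_congr rfl fun j _ => ?_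
    by_cases h : j.1 ∈ Shat
    · rw [hNE j h]
    · simp [hudef, h]
  have hδuv : δ = u + v := by
    funext j
    by_cases h : j.1 ∈ Shat <;> simp [hudef, hvdef, h]
  -- abbreviations
  set U : ℝ := ∑ j, u j ^ 2 with hU
  set V : ℝ := ∑ j, v j ^ 2 with hV
  set E : ℝ := ∑ j, η j ^ 2 with hE
  set T : ℝ := ∑ j ∈ S, (θ j) ^ 2 * (if |θ j| ≤ 2 * lam then (1 : ℝ) else 0) with hT
  have hUnn : 0 ≤ U := Finset.sum_nonneg fun _ _ => sq_nonneg _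
  have hVnn : 0 ≤ V := Finset.sum_nonneg fun _ _ => sq_nonneg _
  have hEnn : 0 ≤ E := Finset.sum_nonneg fun _ _ => sq_nonneg _
  have haU : a * U ≤ u ⬝ᵥ M.mulVec u := (heig u).1
  have hQvb : v ⬝ᵥ M.mulVec v ≤ b * V := (heig v).2
  have hqnn : 0 ≤ u ⬝ᵥ M.mulVec u := hQnn u
  have hQvnn : 0 ≤ v ⬝ᵥ M.mulVec v := hQnn v
  have hCSuv := hCS u v
  have hCSuη : (∑ j, u j * η j) ^ 2 ≤ U * E :=
    Finset.sum_mul_sq_le_sq_mul_sq Finset.univ u η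
  have hqe : u ⬝ᵥ M.mulVec u = (∑ j, u j * η j) - u ⬝ᵥ M.mulVec v := by
    have h1 : u ⬝ᵥ M.mulVec δ = u ⬝ᵥ M.mulVec u + u ⬝ᵥ M.mulVec v := by
      rw [hδuv, Matrix.mulVec_add, dotProduct_add]
    rw [hBuδ] at h1
    linarith
  have hUb : a ^ 2 * U ≤ 2 * E + 2 * a * b * V :=
    key_alg a b U V E (u ⬝ᵥ M.mulVec u) (v ⬝ᵥ M.mulVec v) (∑ j, u j * η j)
      (u ⬝ᵥ M.mulVec v) ha hb hUnn hVnn hEnn hqnn hQvnn hCSuη hCSuv hQvb haU hqe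
  -- V ≤ T
  have hVT : V ≤ T := by
    rw [hV, hT, ← Finset.sum_coe_sort S
      (fun j => (θ j) ^ 2 * (if |θ j| ≤ 2 * lam then (1 : ℝ) else 0))]
    refine Finset.sum_le_sum fun j _ => ?_
    by_cases h : j.1 ∈ Shat
    · have hv0 : v j = 0 := by simp [hvdef, h]
      rw [hv0]
      have hnn : (0:ℝ) ≤ (θ j.1) ^ 2 * (if |θ j.1| ≤ 2 * lam then (1:ℝ) else 0) := by
        split_ifs <;> simp [sq_nonneg]
      simpa using hnn
    · have habs : |θ j.1| ≤ 2 * lam := by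
        by_contra hc
        exact h (hstr j.1 (lt_of_not_ge hc))
      have hvj : v j = θhat j.1 - θ j.1 := by simp [hvdef, hδdef, h]
      rw [hvj, hθhat0 j.1 h, if_pos habs]
      exact le_of_eq (by ring)
  -- LHS decomposition
  have hsplit : ∑ j : Fin d, (θhat j - θ j) ^ 2 = U + V := by
    have h1 : ∑ j ∈ S, (θhat j - θ j) ^ 2 = ∑ j : Fin d, (θhat j - θ j) ^ 2 :=
      Finset.sum_subset (Finset.subset_univ S) (fun x _ hx => by
        rw [hθhat0 x (fun h => hx (hsub h)), hθ0 x hx]; ring)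
    have h2 : ∑ j : {j // j ∈ S}, δ j ^ 2 = ∑ j ∈ S, (θhat j - θ j) ^ 2 :=
      Finset.sum_coe_sort S (fun j => (θhat j - θ j) ^ 2)
    have h3 : ∑ j : {j // j ∈ S}, δ j ^ 2 = U + V := by
      rw [hU, hV, ← Finset.sum_add_distrib]
      refine Finset.sum_congr rfl fun j _ => ?_
      by_cases h : j.1 ∈ Shat <;> simp [hudef, hvdef, h]
    rw [← h1, ← h2, h3]
  -- final combination
  have hEgoal : ∑ j : {j // j ∈ S}, ((colSub Z S)ᵀ.mulVec ε j / n) ^ 2 = E := rfl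
  rw [hsplit]
  have ha2 : (0:ℝ) < a ^ 2 := by positivity
  rw [show (2 * b / a + 1) * T + 2 / a ^ 2 * E
      = (2 * a * b * T + a ^ 2 * T + 2 * E) / a ^ 2 by field_simp]
  rw [le_div_iff₀ ha2]
  have m1 : 2 * a * b * V ≤ 2 * a * b * T :=
    mul_le_mul_of_nonneg_left hVT (by positivity)
  have m2 : a ^ 2 * V ≤ a ^ 2 * T := mul_le_mul_of_nonneg_left hVT (sq_nonneg a)
  nlinarith [hUb, m1, m2]
end

section
/- Let f(z_1, z_2) = ‖ u/‖u‖ − v(z_1,z_2)/‖v(z_1,z_2)‖ ‖_2², where u = (1, −1/12) and v(z_1,z_2) = (1 − z_1, −1/12 + z_2), defined for (z_1,z_2) with 1−z_1 > 0. Then there exists an absolute constant c > 0 such that for all 0 < δ < c and all (z_1, z_2) ∈ [δ/2, 5δ]², f(z_1, z_2) ≥ c·δ². -/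
open Finset

/-- The function `f(z₁,z₂) = ‖u/‖u‖ − v(z₁,z₂)/‖v(z₁,z₂)‖‖₂²` with `u = (1, −1/12)` and
`v(z₁,z₂) = (1−z₁, −1/12+z₂)`. -/
noncomputable def fTwoArm (z1 z2 : ℝ) : ℝ :=
  let u : Fin 2 → ℝ := ![1, -(1 / 12)]
  let v : Fin 2 → ℝ := ![1 - z1, -(1 / 12) + z2]
  ∑ i, (u i / Real.sqrt (∑ k, (u k) ^ 2) - v i / Real.sqrt (∑ k, (v k) ^ 2)) ^ 2

set_option maxHeartbeats 1000000 in
/-- There is an absolute constant `c > 0` such that for all `0 < δ < c`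
and all `(z₁,z₂) ∈ [δ/2, 5δ]²`, `f(z₁,z₂) ≥ c·δ²`. -/
theorem fTwoArm_lower_bound :
    ∃ c : ℝ, 0 < c ∧ ∀ δ : ℝ, 0 < δ → δ < c →
      ∀ z1 z2 : ℝ, z1 ∈ Set.Icc (δ / 2) (5 * δ) → z2 ∈ Set.Icc (δ / 2) (5 * δ) →
        c * δ ^ 2 ≤ fTwoArm z1 z2 := by
  refine ⟨1/576, by norm_num, ?_⟩
  intro δ hδ hδc z1 z2 hz1 hz2
  obtain ⟨h1l, h1r⟩ := hz1
  obtain ⟨h2l, h2r⟩ := hz2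
  have hz1u : z1 ≤ 5/576 := h1r.trans (by nlinarith)
  have hz2u : z2 ≤ 5/576 := h2r.trans (by nlinarith)
  have hz1p : 0 < z1 := lt_of_lt_of_le (by linarith) h1l
  have hz2p : 0 < z2 := lt_of_lt_of_le (by linarith) h2l
  have hBpos : 0 < (1-z1)^2 + (-(1/12)+z2)^2 := by nlinarith [sq_nonneg (-(1/12)+z2)]
  have hBle : (1-z1)^2 + (-(1/12)+z2)^2 ≤ 145/144 := by nlinarith
  have hfeq : fTwoArm z1 z2 =
      (1 / Real.sqrt (145/144) - (1 - z1) / Real.sqrt ((1-z1)^2 + (-(1/12)+z2)^2)) ^ 2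
    + (-(1/12) / Real.sqrt (145/144) - (-(1/12)+z2) / Real.sqrt ((1-z1)^2 + (-(1/12)+z2)^2)) ^ 2 := by
    unfold fTwoArm; simp [Fin.sum_univ_two]; norm_num
  rw [hfeq]
  set a : ℝ := Real.sqrt (145/144) with hadef
  set b : ℝ := Real.sqrt ((1-z1)^2 + (-(1/12)+z2)^2) with hbdef
  have ha2 : a^2 = 145/144 := Real.sq_sqrt (by norm_num)
  have hb2 : b^2 = (1-z1)^2 + (-(1/12)+z2)^2 := Real.sq_sqrt hBpos.le
  have hapos : 0 < a := Real.sqrt_pos.mpr (by norm_num)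
  have hbpos : 0 < b := Real.sqrt_pos.mpr hBpos
  clear_value a b
  clear hfeq hadef hbdef
  have hale : a ≤ 13/12 := by nlinarith
  have hble : b ≤ 13/12 := by nlinarith
  have hPpos : 0 < (1 - z1) + (1/12) * (1/12 - z2) := by linarith
  have hPle : (1 - z1) + (1/12) * (1/12 - z2) ≤ 2 := by linarith
  have hD2ge : δ^2/144 ≤ (z2 - z1/12)^2 := by nlinarith
  have e1 : (1 / a - (1 - z1) / b) * (a*b) = b - a*(1-z1) := by
    field_simp
  have e2 : (-(1/12) / a - (-(1/12)+z2) / b) * (a*b) = b*(-(1/12)) - a*(-(1/12)+z2) := by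
    field_simp
  have hf : ((1 / a - (1 - z1) / b) ^ 2 + (-(1/12) / a - (-(1/12)+z2) / b) ^ 2) * (a*b)^2
      = 2 * ((145/144) * b^2 - a*b*((1 - z1) + (1/12) * (1/12 - z2))) := by
    calc ((1 / a - (1 - z1) / b) ^ 2 + (-(1/12) / a - (-(1/12)+z2) / b) ^ 2) * (a*b)^2
        = ((1 / a - (1 - z1) / b) * (a*b))^2 + ((-(1/12) / a - (-(1/12)+z2) / b) * (a*b))^2 := by
          ring
      _ = (b - a*(1-z1))^2 + (b*(-(1/12)) - a*(-(1/12)+z2))^2 := by rw [e1, e2]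
      _ = 2 * ((145/144) * b^2 - a*b*((1 - z1) + (1/12) * (1/12 - z2))) := by
          linear_combination ((1-z1)^2 + (-(1/12)+z2)^2) * ha2 - (145/144) * hb2
  have key : ((145/144) * b^2 - a*b*((1 - z1) + (1/12) * (1/12 - z2)))
      * ((145/144) * b^2 + a*b*((1 - z1) + (1/12) * (1/12 - z2)))
      = (145/144) * b^2 * (z2 - z1/12)^2 := by
    linear_combination (-(b^2 * ((1 - z1) + (1/12) * (1/12 - z2))^2)) * ha2
      + ((145/144)^2 * b^2) * hb2
  have hable : a*b ≤ 169/144 :=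
    (mul_le_mul hale hble hbpos.le (by norm_num)).trans_eq (by norm_num)
  have habP : a*b*((1 - z1) + (1/12) * (1/12 - z2)) ≤ (169/144)*2 :=
    mul_le_mul hable hPle hPpos.le (by norm_num)
  have hsumle : (145/144) * b^2 + a*b*((1 - z1) + (1/12) * (1/12 - z2)) ≤ 8 := by
    rw [hb2]; linarith
  have hsumpos : 0 < (145/144) * b^2 + a*b*((1 - z1) + (1/12) * (1/12 - z2)) := by positivity
  have hk : 0 ≤ ((145/144) * b^2 - a*b*((1 - z1) + (1/12) * (1/12 - z2)))
      * ((145/144) * b^2 + a*b*((1 - z1) + (1/12) * (1/12 - z2))) := by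
    rw [key]; positivity
  have hdiffnn : 0 ≤ (145/144) * b^2 - a*b*((1 - z1) + (1/12) * (1/12 - z2)) :=
    le_of_mul_le_mul_right (by rw [zero_mul]; exact hk) hsumpos
  have hab2 : (a*b)^2 = (145/144) * b^2 := by rw [mul_pow, ha2]
  have step1 : (145/144) * b^2 * (δ^2/144) ≤ (145/144) * b^2 * (z2 - z1/12)^2 :=
    mul_le_mul_of_nonneg_left hD2ge (by positivity)
  have step2 : ((145/144) * b^2 - a*b*((1 - z1) + (1/12) * (1/12 - z2)))
      * ((145/144) * b^2 + a*b*((1 - z1) + (1/12) * (1/12 - z2)))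
      ≤ ((145/144) * b^2 - a*b*((1 - z1) + (1/12) * (1/12 - z2))) * 8 :=
    mul_le_mul_of_nonneg_left hsumle hdiffnn
  have hmain : (1/576) * δ^2 * (a*b)^2 ≤
      ((1 / a - (1 - z1) / b) ^ 2 + (-(1/12) / a - (-(1/12)+z2) / b) ^ 2) * (a*b)^2 := by
    rw [hf, hab2]
    linarith [step1, step2, key]
  have habpos : 0 < (a*b)^2 := by positivity
  calc 1/576 * δ^2 = (1/576 * δ^2 * (a*b)^2) / (a*b)^2 := by field_simp
    _ ≤ _ := by
      rw [div_le_iff₀ habpos]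
      calc 1/576 * δ^2 * (a*b)^2 ≤ _ := hmain
end

section
/- Projection lower-bound for the separation condition: let θ^(1), …, θ^(K) ∈ ℝ^d, and for i,j define u_{i,j} = θ^(i) − θ^(j). Then for any k ≠ ℓ, the distance from u_{k,ℓ} to span({u_{k,j} : j ≠ k, ℓ}) is at least the distance from θ^(ℓ) to span({θ^(j) : j ≠ ℓ}). That is, ‖u_{k,ℓ} − proj(u_{k,ℓ}; span({u_{k,j}: j ≠ k,ℓ}))‖_2 ≥ ‖θ^(ℓ) − proj(θ^(ℓ); span({θ^(j): j ≠ ℓ}))‖_2. -/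
/-- Projection lower-bound for the separation condition: with
`u_{i,j} = θ^(i) − θ^(j)`, for any `k ≠ ℓ` the distance from `u_{k,ℓ}` to
`span({u_{k,j} : j ≠ k, ℓ})` is at least the distance from `θ^(ℓ)` to
`span({θ^(j) : j ≠ ℓ})`. -/
theorem dist_diff_span_ge_dist_span (d K : ℕ) (θ : Fin K → EuclideanSpace ℝ (Fin d))
    (k l : Fin K) (hkl : k ≠ l) :
    Metric.infDist (θ l)
        ((Submodule.span ℝ {x | ∃ j, j ≠ l ∧ x = θ j} : Submodule ℝ _) : Set _) ≤
      Metric.infDist (θ k - θ l)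
        ((Submodule.span ℝ {x | ∃ j, j ≠ k ∧ j ≠ l ∧ x = θ k - θ j} :
            Submodule ℝ _) : Set _) := by
  set S1 : Submodule ℝ (EuclideanSpace ℝ (Fin d)) :=
    Submodule.span ℝ {x | ∃ j, j ≠ l ∧ x = θ j}
  set S2 : Submodule ℝ (EuclideanSpace ℝ (Fin d)) :=
    Submodule.span ℝ {x | ∃ j, j ≠ k ∧ j ≠ l ∧ x = θ k - θ j}
  have hθ : ∀ j : Fin K, j ≠ l → θ j ∈ S1 := fun j hj =>
    Submodule.subset_span ⟨j, hj, rfl⟩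
  have hS : S2 ≤ S1 := by
    apply Submodule.span_le.2
    rintro x ⟨j, hjk, hjl, rfl⟩
    exact sub_mem (hθ k hkl) (hθ j hjl)
  by_contra h
  push_neg at h
  obtain ⟨y, hy, hlt⟩ := (Metric.infDist_lt_iff ⟨0, Submodule.zero_mem S2⟩).1 h
  refine absurd hlt (not_lt.2 ?_)
  have hmem : θ k - y ∈ S1 := sub_mem (hθ k hkl) (hS hy)
  calc Metric.infDist (θ l) (S1 : Set _) ≤ dist (θ l) (θ k - y) :=
        Metric.infDist_le_dist_of_mem hmem
    _ = dist (θ k - θ l) y := by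
        rw [dist_eq_norm, dist_eq_norm, ← norm_neg (θ l - (θ k - y))]
        congr 1
        abel
end
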